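/- The implied volatility function is real analytic: if I : ℝ³ → ℝ satisfies I(S,K,c) > 0 and C_BS(S, K, I(S,K,c)) = c for all (S,K,c) ∈ D_I, then I is real analytic on the open set D_I. -/

import Mathlib

open Real Set Filter

/-- Standard normal cdf. -/
noncomputable def stdNormalCDF (x : ℝ) : ℝ :=
  ∫ t in Set.Iio x, Real.exp (-t ^ 2 / 2) / Real.sqrt (2 * Real.pi)

/-- Black–Scholes call price with maturity `T`. -/
noncomputable def C_BS (T S K σ : ℝ) : ℝ :=
  S * stdNormalCDF (Real.log (S / K) / (σ * Real.sqrt T) + σ * Real.sqrt T / 2) -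
  K * stdNormalCDF (Real.log (S / K) / (σ * Real.sqrt T) - σ * Real.sqrt T / 2)

/-- The domain of the implied volatility function. -/
def D_I : Set (Fin 3 → ℝ) :=
  {x | 0 < x 0 ∧ 0 < x 1 ∧ max (x 0 - x 1) 0 < x 2 ∧ x 2 < x 0}

/-!
The map `(S, K, σ) ↦ C_BS T S K σ` is real analytic on `S, K, σ > 0`: the only non-elementary
ingredient is `N`, and `N` is analytic because its derivative `e^{-x²/2}/√(2π)` is the restriction
of an entire function, so `N` is, up to a constant, the real part of a complex primitive of it.
With `φ = stdNormalPDF`, the identity `K φ(d₂) = S φ(d₁)` reduces the vega `∂C_BS/∂σ` to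
`S φ(d₁) √T > 0`. The analytic implicit function theorem then solves `C_BS T S K σ = c` for `σ`
analytically near every point of `D_I`, and since `σ ↦ C_BS T S K σ` is strictly increasing this
local solution must coincide with `I`.
-/

open Topology ContDiff MeasureTheory

theorem AnalyticAt.exists_implicitFunction {𝕜 : Type*} [RCLike 𝕜]
    {E₁ : Type*} [NormedAddCommGroup E₁] [NormedSpace 𝕜 E₁] [CompleteSpace E₁]
    {E₂ : Type*} [NormedAddCommGroup E₂] [NormedSpace 𝕜 E₂] [CompleteSpace E₂]
    {F : Type*} [NormedAddCommGroup F] [NormedSpace 𝕜 F] [CompleteSpace F]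
    {f : E₁ × E₂ → F} {u : E₁ × E₂} (hf : AnalyticAt 𝕜 f u)
    (if₂ : (fderiv 𝕜 f u ∘L .inr 𝕜 E₁ E₂).IsInvertible) :
    ∃ ψ : E₁ → E₂, AnalyticAt 𝕜 ψ u.1 ∧ ψ u.1 = u.2 ∧ ∀ᶠ x in 𝓝 u.1, f (x, ψ x) = f u := by
  have hω : ContDiffAt 𝕜 ω f u := hf.contDiffAt
  exact ⟨hω.implicitFunction (by simp) if₂, (hω.contDiffAt_implicitFunction _ _).analyticAt,
    hω.implicitFunction_apply_self _ _, hω.eventually_apply_implicitFunction _ _⟩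

theorem isInvertible_fderiv_comp_inr_of_hasDerivAt {𝕜 : Type*} [NontriviallyNormedField 𝕜]
    {E : Type*} [NormedAddCommGroup E] [NormedSpace 𝕜 E]
    {f : E × 𝕜 → 𝕜} {u : E × 𝕜} {d : 𝕜} (hf : DifferentiableAt 𝕜 f u)
    (hd : HasDerivAt (fun t => f (u.1, t)) d u.2) (hd0 : d ≠ 0) :
    (fderiv 𝕜 f u ∘L .inr 𝕜 E 𝕜).IsInvertible := by
  have h : HasFDerivAt (fun t => f (u.1, t)) (fderiv 𝕜 f u ∘L .inr 𝕜 E 𝕜) u.2 :=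
    hf.hasFDerivAt.comp u.2 (hasFDerivAt_prodMk_right u.1 u.2)
  refine ⟨.unitsEquivAut 𝕜 (.mk0 d hd0), ?_⟩
  rw [h.unique hd.hasFDerivAt]
  ext
  simp

theorem analyticAt_of_forall_hasDerivAt_re {f : ℝ → ℝ} {F : ℂ → ℂ} (hF : Differentiable ℂ F)
    (hf : ∀ x : ℝ, HasDerivAt f (F x).re x) (x : ℝ) : AnalyticAt ℝ f x := by
  obtain ⟨G, hG⟩ := hF.isExactOn_univ
  obtain ⟨c, hc⟩ : ∃ c, ∀ y, f y = (G y).re + c := by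
    refine ⟨f 0 - (G 0).re, fun y => ?_⟩
    have hder : ∀ y : ℝ, HasDerivAt (fun y => f y - (G y).re) 0 y := fun y =>
      ((hf y).sub (hG y (mem_univ _)).real_of_complex).congr_deriv (sub_self _)
    have := is_const_of_deriv_eq_zero (fun y => (hder y).differentiableAt)
      (fun y => (hder y).deriv) y 0
    simp only [Complex.ofReal_zero] at this
    linarith
  rw [funext hc]
  have hGd : Differentiable ℂ G := fun z => (hG z (mem_univ z)).differentiableAt
  exact (hGd.analyticAt _).re_ofReal.add analyticAt_const

noncomputable def stdNormalPDF (x : ℝ) : ℝ := rexp (-x ^ 2 / 2) / √(2 * π)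

theorem stdNormalPDF_pos (x : ℝ) : 0 < stdNormalPDF x := by
  unfold stdNormalPDF; positivity

theorem integrable_stdNormalPDF : Integrable stdNormalPDF := by
  have h := (integrable_exp_neg_mul_sq (b := 1 / 2) (by norm_num)).div_const √(2 * π)
  convert h using 2 with x
  simp only [stdNormalPDF]; ring_nf

theorem hasDerivAt_stdNormalCDF (x : ℝ) : HasDerivAt stdNormalCDF (stdNormalPDF x) x := by
  have hcont : Continuous stdNormalPDF := by unfold stdNormalPDF; fun_prop
  have h : ∀ y, stdNormalCDF y = stdNormalCDF 0 + ∫ t in (0 : ℝ)..y, stdNormalPDF t := fun y => by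
    rw [intervalIntegral.integral_Iic_sub_Iic integrable_stdNormalPDF.integrableOn
      integrable_stdNormalPDF.integrableOn |>.symm]
    simp only [stdNormalCDF, ← integral_Iic_eq_integral_Iio, stdNormalPDF]
    ring
  rw [funext h]
  exact ((hcont.integral_hasStrictDerivAt 0 x).hasDerivAt).const_add _

theorem analyticAt_stdNormalCDF (x : ℝ) : AnalyticAt ℝ stdNormalCDF x := by
  refine analyticAt_of_forall_hasDerivAt_re (F := fun z => Complex.exp (-z ^ 2 / 2) / √(2 * π))
    (by fun_prop) (fun y => ?_) x
  convert hasDerivAt_stdNormalCDF y using 1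
  rw [stdNormalPDF, ← Complex.ofReal_pow, ← Complex.ofReal_neg, ← Complex.ofReal_ofNat,
    ← Complex.ofReal_div, ← Complex.ofReal_exp, ← Complex.ofReal_div, Complex.ofReal_re]

theorem mul_stdNormalPDF_sub_half {S K v : ℝ} (hS : 0 < S) (hK : 0 < K) (hv : v ≠ 0) :
    K * stdNormalPDF (Real.log (S / K) / v - v / 2) =
      S * stdNormalPDF (Real.log (S / K) / v + v / 2) := by
  have hexp : rexp (-(Real.log (S / K) / v - v / 2) ^ 2 / 2)
      = rexp (-(Real.log (S / K) / v + v / 2) ^ 2 / 2) * (S / K) := by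
    rw [← exp_log (div_pos hS hK), ← Real.exp_add, exp_log (div_pos hS hK)]
    congr 1
    field_simp
    ring
  rw [stdNormalPDF, stdNormalPDF, hexp]
  field_simp

theorem hasDerivAt_C_BS {T S K σ : ℝ} (hT : 0 < T) (hS : 0 < S) (hK : 0 < K) (hσ : 0 < σ) :
    HasDerivAt (C_BS T S K)
      (S * stdNormalPDF (Real.log (S / K) / (σ * √T) + σ * √T / 2) * √T) σ := by
  have hr : 0 < √T := sqrt_pos.mpr hT
  have hv : σ * √T ≠ 0 := by positivity
  have hlog : HasDerivAt (fun s => Real.log (S / K) / (s * √T))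
      (-Real.log (S / K) / (σ ^ 2 * √T)) σ := by
    refine ((hasDerivAt_const σ _).div ((hasDerivAt_id' σ).mul_const √T) hv).congr_deriv ?_
    field_simp
    ring
  have hhalf : HasDerivAt (fun s => s * √T / 2) (√T / 2) σ := by
    simpa using ((hasDerivAt_id σ).mul_const √T).div_const 2
  have hd₁ : HasDerivAt (fun s => Real.log (S / K) / (s * √T) + s * √T / 2)
      (-Real.log (S / K) / (σ ^ 2 * √T) + √T / 2) σ := hlog.add hhalf
  have hd₂ : HasDerivAt (fun s => Real.log (S / K) / (s * √T) - s * √T / 2)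
      (-Real.log (S / K) / (σ ^ 2 * √T) - √T / 2) σ := hlog.sub hhalf
  have h := ((hasDerivAt_stdNormalCDF _).comp σ hd₁).const_mul S |>.sub
    (((hasDerivAt_stdNormalCDF _).comp σ hd₂).const_mul K)
  refine h.congr_deriv ?_
  linear_combination (Real.log (S / K) / (σ ^ 2 * √T) + √T / 2) * mul_stdNormalPDF_sub_half hS hK hv

theorem strictMonoOn_C_BS {T S K : ℝ} (hT : 0 < T) (hS : 0 < S) (hK : 0 < K) :
    StrictMonoOn (C_BS T S K) (Ioi 0) := by
  refine strictMonoOn_of_deriv_pos (convex_Ioi 0)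
    (fun σ hσ => (hasDerivAt_C_BS hT hS hK hσ).continuousAt.continuousWithinAt) (fun σ hσ => ?_)
  rw [interior_Ioi] at hσ
  rw [(hasDerivAt_C_BS hT hS hK hσ).deriv]
  have := stdNormalPDF_pos (Real.log (S / K) / (σ * √T) + σ * √T / 2)
  have := sqrt_pos.mpr hT
  positivity

theorem AnalyticAt.C_BS {E : Type*} [NormedAddCommGroup E] [NormedSpace ℝ E] {T : ℝ}
    {S K σ : E → ℝ} {x : E} (hT : 0 < T) (hS : AnalyticAt ℝ S x) (hK : AnalyticAt ℝ K x)
    (hσ : AnalyticAt ℝ σ x) (hS0 : 0 < S x) (hK0 : 0 < K x) (hσ0 : 0 < σ x) :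
    AnalyticAt ℝ (fun y => C_BS T (S y) (K y) (σ y)) x := by
  have hv : AnalyticAt ℝ (fun y => σ y * √T) x := hσ.mul analyticAt_const
  have hd : AnalyticAt ℝ (fun y => Real.log (S y / K y) / (σ y * √T)) x :=
    ((analyticAt_log (div_pos hS0 hK0)).comp (f := fun y => S y / K y) (hS.div hK hK0.ne')).div
      hv (by have := sqrt_pos.mpr hT; positivity)
  have hN := fun {g : E → ℝ} (hg : AnalyticAt ℝ g x) => (analyticAt_stdNormalCDF (g x)).comp hg
  have hhalf : AnalyticAt ℝ (fun y => σ y * √T / 2) x := hv.div_const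
  exact (hS.mul (hN (hd.add hhalf))).sub (hK.mul (hN (hd.sub hhalf)))

theorem isOpen_D_I : IsOpen D_I := by
  have h : ∀ i : Fin 3, Continuous fun x : Fin 3 → ℝ => x i := continuous_apply
  exact (isOpen_lt continuous_const (h 0)).inter <| (isOpen_lt continuous_const (h 1)).inter <|
    (isOpen_lt (((h 0).sub (h 1)).max continuous_const) (h 2)).inter (isOpen_lt (h 2) (h 0))

/-- The implied volatility function is real analytic on `D_I`. -/
theorem implied_vol_analytic (T : ℝ) (hT : 0 < T)
    (I : (Fin 3 → ℝ) → ℝ)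
    (hIpos : ∀ x ∈ D_I, 0 < I x)
    (hI : ∀ x ∈ D_I, C_BS T (x 0) (x 1) (I x) = x 2) :
    AnalyticOnNhd ℝ I D_I := by
  intro p hp
  set F : (Fin 3 → ℝ) × ℝ → ℝ := fun v => C_BS T (v.1 0) (v.1 1) v.2 - v.1 2
  have hcoord (i : Fin 3) : AnalyticAt ℝ (fun v : (Fin 3 → ℝ) × ℝ => v.1 i) (p, I p) :=
    analyticAt_pi_iff.1 analyticAt_fst i
  have hF : AnalyticAt ℝ F (p, I p) :=
    (AnalyticAt.C_BS (S := fun v : (Fin 3 → ℝ) × ℝ => v.1 0) (K := fun v => v.1 1)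
      (σ := Prod.snd) hT (hcoord 0) (hcoord 1) analyticAt_snd hp.1 hp.2.1 (hIpos p hp)).sub
      (hcoord 2)
  have hvega := hasDerivAt_C_BS hT hp.1 hp.2.1 (hIpos p hp)
  have hvega_pos :
      0 < p 0 * stdNormalPDF (Real.log (p 0 / p 1) / (I p * √T) + I p * √T / 2) * √T :=
    mul_pos (mul_pos hp.1 (stdNormalPDF_pos _)) (sqrt_pos.mpr hT)
  have hinv := isInvertible_fderiv_comp_inr_of_hasDerivAt hF.differentiableAt
    (hvega.sub_const (p 2)) hvega_pos.ne'
  obtain ⟨ψ, hψ, hψp, hFψ⟩ := hF.exists_implicitFunction hinv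
  dsimp only at hψ hψp hFψ
  have hψpos : ∀ᶠ y in 𝓝 p, 0 < ψ y :=
    continuousAt_const.eventually_lt hψ.continuousAt (hψp ▸ hIpos p hp)
  refine hψ.congr ?_
  filter_upwards [isOpen_D_I.mem_nhds hp, hFψ, hψpos] with y hy hFy hψy
  refine (strictMonoOn_C_BS hT hy.1 hy.2.1).injOn hψy (hIpos y hy) ?_
  simp only [F, hI p hp, sub_self, sub_eq_zero] at hFy
  rw [hFy, hI y hy]
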